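/- arXiv:1206.3679 — 5 statements merged into one kernel-verified Lean document; each statement's English description precedes it below -/
import Mathlib

section
/- Let a : ℕ → ℝ be a sequence with a(n) > 0 for all n ≥ 1, a(1) = a(2) = a(3) = 1, a(5) ≥ 3, and such that for every integer n ≥ 4 both a(n−1) + a(n−3) ≤ a(n) ≤ 2·a(n−1) and 2·a(n−1) − Σ_{j=2}^{n+1−⌈√(n−1)⌉} a(j) ≤ a(n). Then there exists a real constant C with 0 < C < 1 such that lim_{n→∞} a(n)/2^n = C. -/
open Filter Finset Real

/-!
Since `a n ≤ 2 a (n - 1)`, the ratio `b n = a n / 2 ^ n` decreases from `n = 3` on, so it converges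
to its infimum `C ≤ b 3 = 1 / 8`. For `C > 0`: `a` is increasing and `a (k + 3) ≥ 2 a k`, so each of
the at most `p + 1` terms of the sum in the second lower bound at `n = p + 1` is at most
`a p / 2 ^ t` with `t = (⌈√p⌉ - 2) / 3`. Hence `b (p + 1) ≥ b p (1 - defect p)`, where
`defect p ≈ p 2 ^ (-√p / 3)` is summable, and then `b n ≥ b N / 2` for all `n` once the tail of
`defect` beyond `N` is below `1 / 2`.
-/

section Telescoping

variable {b ε : ℕ → ℝ}

theorem Antitone.mul_one_sub_sum_le (hb : Antitone b) (hε : ∀ n, 0 ≤ ε n)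
    (hstep : ∀ n, b n * (1 - ε n) ≤ b (n + 1)) (N n : ℕ) :
    b N * (1 - ∑ i ∈ range n, ε (N + i)) ≤ b (N + n) := by
  induction n with
  | zero => simp
  | succ n ih =>
    have hbN : b (N + n) ≤ b N := hb (Nat.le_add_right N n)
    have := mul_le_mul_of_nonneg_right hbN (hε (N + n))
    rw [sum_range_succ, ← add_assoc]
    nlinarith [hstep (N + n)]

theorem Antitone.iInf_pos_of_mul_one_sub_le (hb : Antitone b) (hpos : ∀ n, 0 < b n)
    (hε : ∀ n, 0 ≤ ε n) (hsum : Summable ε) (hstep : ∀ n, b n * (1 - ε n) ≤ b (n + 1)) :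
    0 < ⨅ n, b n := by
  obtain ⟨N, hN⟩ := eventually_atTop.1 <|
    (tendsto_sum_nat_add ε).eventually_le_const (by norm_num : (0 : ℝ) < 1 / 2)
  have htail : ∀ n, ∑ i ∈ range n, ε (N + i) ≤ 1 / 2 := fun n => by
    have hsumN : Summable fun i => ε (N + i) := by
      simpa only [add_comm N] using (summable_nat_add_iff N).2 hsum
    calc ∑ i ∈ range n, ε (N + i) ≤ ∑' i, ε (N + i) :=
          hsumN.sum_le_tsum _ fun i _ => hε _
      _ = ∑' i, ε (i + N) := by simp only [add_comm N]
      _ ≤ 1 / 2 := hN N le_rfl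
  have hbound : ∀ n, b N / 2 ≤ b n := fun n =>
    calc b N / 2 ≤ b N * (1 - ∑ i ∈ range n, ε (N + i)) := by
          nlinarith [htail n, hpos N]
      _ ≤ b (N + n) := hb.mul_one_sub_sum_le hε hstep N n
      _ ≤ b n := hb (Nat.le_add_left n N)
  exact (half_pos (hpos N)).trans_le (le_ciInf hbound)

end Telescoping

theorem exists_pow_le_mul_two_pow (k : ℕ) : ∃ B : ℝ, ∀ n : ℕ, (n : ℝ) ^ k ≤ B * 2 ^ n := by
  obtain ⟨B, hB⟩ := (tendsto_pow_const_div_const_pow_of_one_lt k one_lt_two).bddAbove_range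
  exact ⟨B, fun n => (div_le_iff₀ (by positivity)).1 (hB ⟨n, rfl⟩)⟩

noncomputable def doublingSteps (p : ℕ) : ℕ := (⌈√(p : ℝ)⌉₊ - 2) / 3

noncomputable def defect (p : ℕ) : ℝ := (p + 1) / 2 ^ (doublingSteps p + 1)

theorem defect_nonneg (p : ℕ) : 0 ≤ defect p := by unfold defect; positivity

theorem le_sq_ceil_sqrt (p : ℕ) : p ≤ ⌈√(p : ℝ)⌉₊ ^ 2 := by
  have h : √(p : ℝ) ^ 2 ≤ (⌈√(p : ℝ)⌉₊ : ℝ) ^ 2 := by gcongr; exact Nat.le_ceil _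
  rw [sq_sqrt (Nat.cast_nonneg p)] at h
  exact_mod_cast h

theorem add_one_le_nine_mul_sq_doublingSteps (p : ℕ) : p + 1 ≤ 9 * (doublingSteps p + 2) ^ 2 := by
  have hc : ⌈√(p : ℝ)⌉₊ ≤ 3 * doublingSteps p + 4 := by unfold doublingSteps; omega
  have := le_sq_ceil_sqrt p
  nlinarith

theorem summable_defect : Summable defect := by
  obtain ⟨B, hB⟩ := exists_pow_le_mul_two_pow 6
  have hle : ∀ p : ℕ, defect p ≤ 1458 * B * (1 / ((p + 1 : ℕ) : ℝ) ^ 2) := fun p => by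
    set s := doublingSteps p
    have hp : ((p : ℝ) + 1) ^ 3 ≤ 1458 * B * 2 ^ (s + 1) := by
      have h9 : (p : ℝ) + 1 ≤ 9 * ((s + 2 : ℕ) : ℝ) ^ 2 := by
        exact_mod_cast add_one_le_nine_mul_sq_doublingSteps p
      calc ((p : ℝ) + 1) ^ 3 ≤ (9 * ((s + 2 : ℕ) : ℝ) ^ 2) ^ 3 := by gcongr
        _ = 729 * ((s + 2 : ℕ) : ℝ) ^ 6 := by ring
        _ ≤ 729 * (B * 2 ^ (s + 2)) := by gcongr; exact hB _
        _ = 1458 * B * 2 ^ (s + 1) := by ring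
    rw [defect, mul_one_div, div_le_div_iff₀ (by positivity) (by positivity)]
    push_cast
    linarith
  refine Summable.of_nonneg_of_le defect_nonneg hle (Summable.mul_left _ ?_)
  exact (summable_nat_add_iff 1).2 (summable_one_div_nat_pow.2 one_lt_two)

section Growth

variable {a : ℕ → ℝ}

theorem monotoneOn_of_add_le (hpos : ∀ n, 1 ≤ n → 0 < a n)
    (h1 : a 1 = 1) (h2 : a 2 = 1) (h3 : a 3 = 1)
    (hlow : ∀ n, 4 ≤ n → a (n - 1) + a (n - 3) ≤ a n) : MonotoneOn a (Set.Ici 1) := by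
  refine monotoneOn_nat_Ici_of_le_succ fun n hn => ?_
  rcases Nat.lt_or_ge n 3 with hn3 | hn3
  · interval_cases n <;> simp [h1, h2, h3]
  · have := hlow (n + 1) (by omega)
    rw [Nat.add_sub_cancel] at this
    linarith [hpos (n + 1 - 3) (by omega)]

theorem two_pow_mul_le_of_add_le (hmono : MonotoneOn a (Set.Ici 1))
    (hlow : ∀ n, 4 ≤ n → a (n - 1) + a (n - 3) ≤ a n) {k : ℕ} (hk : 1 ≤ k) (t : ℕ) :
    2 ^ t * a k ≤ a (k + 3 * t) := by
  induction t with
  | zero => simp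
  | succ t ih =>
    have hdouble : 2 * a (k + 3 * t) ≤ a (k + 3 * (t + 1)) := by
      have := hlow (k + 3 * (t + 1)) (by omega)
      rw [show k + 3 * (t + 1) - 1 = k + 3 * t + 2 by omega,
        show k + 3 * (t + 1) - 3 = k + 3 * t by omega] at this
      have := hmono (a := k + 3 * t) (b := k + 3 * t + 2) (Set.mem_Ici.2 (by omega))
        (Set.mem_Ici.2 (by omega)) (by omega)
      linarith
    rw [pow_succ]
    linarith

theorem antitone_div_two_pow (hup : ∀ n, 4 ≤ n → a n ≤ 2 * a (n - 1)) :
    Antitone fun n => a (n + 3) / 2 ^ (n + 3) := by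
  refine antitone_nat_of_succ_le fun n => ?_
  have := hup (n + 1 + 3) (by omega)
  rw [show n + 1 + 3 - 1 = n + 3 by omega] at this
  rw [show n + 1 + 3 = n + 3 + 1 by ring, pow_succ,
    div_le_div_iff₀ (by positivity) (by positivity)]
  nlinarith [pow_pos (two_pos : (0 : ℝ) < 2) (n + 3)]

theorem sum_Icc_le_mul_div_two_pow (hpos : ∀ n, 1 ≤ n → 0 < a n)
    (hmono : MonotoneOn a (Set.Ici 1))
    (hlow : ∀ n, 4 ≤ n → a (n - 1) + a (n - 3) ≤ a n) {p : ℕ} (hp : 2 ≤ p) :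
    ∑ j ∈ Icc 2 (p + 2 - ⌈√(p : ℝ)⌉₊), a j ≤ (p + 1) * (a p / 2 ^ doublingSteps p) := by
  set c := ⌈√(p : ℝ)⌉₊
  set m := p + 2 - c
  have hc2 : 2 ≤ c := Nat.lt_ceil.2 <| by
    rw [Nat.cast_one, Real.lt_sqrt zero_le_one]; exact_mod_cast (by omega : 1 < p)
  have hcp : c ≤ p := Nat.ceil_le.2 <| Real.sqrt_le_iff.2
    ⟨by positivity, by exact_mod_cast (by nlinarith : p ≤ p ^ 2)⟩
  have ham : a m ≤ a p / 2 ^ doublingSteps p := by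
    rw [le_div_iff₀ (by positivity), mul_comm]
    refine (two_pow_mul_le_of_add_le hmono hlow (by omega) _).trans
      (hmono (Set.mem_Ici.2 (by omega)) (Set.mem_Ici.2 (by omega)) ?_)
    unfold doublingSteps; omega
  calc ∑ j ∈ Icc 2 m, a j ≤ #(Icc 2 m) • a m :=
        sum_le_card_nsmul _ _ _ fun j hj => by
          rw [mem_Icc] at hj
          exact hmono (Set.mem_Ici.2 (by omega)) (Set.mem_Ici.2 (by omega)) hj.2
    _ ≤ (p + 1) * a m := by
        rw [nsmul_eq_mul, Nat.card_Icc]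
        gcongr
        · exact (hpos m (by omega)).le
        · exact_mod_cast (by omega : m + 1 - 2 ≤ p + 1)
    _ ≤ (p + 1) * (a p / 2 ^ doublingSteps p) := by gcongr

theorem div_two_pow_mul_one_sub_defect_le (hpos : ∀ n, 1 ≤ n → 0 < a n)
    (hmono : MonotoneOn a (Set.Ici 1))
    (hlow : ∀ n, 4 ≤ n → a (n - 1) + a (n - 3) ≤ a n)
    (hlow2 : ∀ n, 4 ≤ n →
      2 * a (n - 1) - ∑ j ∈ Finset.Icc 2 (n + 1 - ⌈Real.sqrt ((n : ℝ) - 1)⌉₊), a j ≤ a n)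
    {p : ℕ} (hp : 3 ≤ p) :
    a p / 2 ^ p * (1 - defect p) ≤ a (p + 1) / 2 ^ (p + 1) := by
  have h := hlow2 (p + 1) (by omega)
  rw [Nat.add_sub_cancel, Nat.cast_add_one, add_sub_cancel_right,
    show p + 1 + 1 = p + 2 by ring] at h
  have hS := sum_Icc_le_mul_div_two_pow hpos hmono hlow (by omega : 2 ≤ p)
  calc a p / 2 ^ p * (1 - defect p)
      = (2 * a p - (p + 1) * (a p / 2 ^ doublingSteps p)) / 2 ^ (p + 1) := by
        rw [defect]; field_simp; ring
    _ ≤ a (p + 1) / 2 ^ (p + 1) := by gcongr; linarith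

end Growth

theorem stmt_0_general (a : ℕ → ℝ)
    (hpos : ∀ n, 1 ≤ n → 0 < a n)
    (h1 : a 1 = 1) (h2 : a 2 = 1) (h3 : a 3 = 1)
    (hlow : ∀ n, 4 ≤ n → a (n - 1) + a (n - 3) ≤ a n)
    (hup : ∀ n, 4 ≤ n → a n ≤ 2 * a (n - 1))
    (hlow2 : ∀ n, 4 ≤ n →
      2 * a (n - 1) - ∑ j ∈ Finset.Icc 2 (n + 1 - ⌈Real.sqrt ((n : ℝ) - 1)⌉₊), a j ≤ a n) :
    ∃ C : ℝ, 0 < C ∧ C < 1 ∧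
      Tendsto (fun n => a n / 2 ^ n) atTop (nhds C) := by
  set b : ℕ → ℝ := fun n => a (n + 3) / 2 ^ (n + 3)
  have hb : Antitone b := antitone_div_two_pow hup
  have hbpos : ∀ n, 0 < b n := fun n => div_pos (hpos _ (by omega)) (by positivity)
  have hbdd : BddBelow (Set.range b) := ⟨0, Set.forall_mem_range.2 fun n => (hbpos n).le⟩
  have hmono := monotoneOn_of_add_le hpos h1 h2 h3 hlow
  have hstep : ∀ n, b n * (1 - defect (n + 3)) ≤ b (n + 1) := fun n =>
    div_two_pow_mul_one_sub_defect_le hpos hmono hlow hlow2 (by omega)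
  refine ⟨⨅ n, b n, hb.iInf_pos_of_mul_one_sub_le hbpos (fun n => defect_nonneg _)
    ((summable_nat_add_iff 3).2 summable_defect) hstep, ?_, ?_⟩
  · calc ⨅ n, b n ≤ b 0 := ciInf_le hbdd 0
      _ < 1 := by norm_num [b, h3]
  · exact (tendsto_add_atTop_iff_nat 3).1 (tendsto_atTop_ciInf hb hbdd)

theorem stmt_0 (a : ℕ → ℝ)
    (hpos : ∀ n, 1 ≤ n → 0 < a n)
    (h1 : a 1 = 1) (h2 : a 2 = 1) (h3 : a 3 = 1) (h5 : 3 ≤ a 5)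
    (hlow : ∀ n, 4 ≤ n → a (n - 1) + a (n - 3) ≤ a n)
    (hup : ∀ n, 4 ≤ n → a n ≤ 2 * a (n - 1))
    (hlow2 : ∀ n, 4 ≤ n →
      2 * a (n - 1) - ∑ j ∈ Finset.Icc 2 (n + 1 - ⌈Real.sqrt ((n : ℝ) - 1)⌉₊), a j ≤ a n) :
    ∃ C : ℝ, 0 < C ∧ C < 1 ∧
      Tendsto (fun n => a n / 2 ^ n) atTop (nhds C) :=
  stmt_0_general a hpos h1 h2 h3 hlow hup hlow2
end

section
/- Let a : ℕ → ℝ be a sequence with a(n) > 0 for all n ≥ 1, a(2) ≤ 2·a(1), a(3) ≤ 2·a(2), and such that a(n−1) + a(n−3) ≤ a(n) ≤ 2·a(n−1) for every integer n ≥ 4. Then for every integer n ≥ 4 one has 5/4 ≤ a(n)/a(n−1) ≤ 2. -/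
theorem stmt_1 (a : ℕ → ℝ)
    (hpos : ∀ n, 1 ≤ n → 0 < a n)
    (h2 : a 2 ≤ 2 * a 1) (h3 : a 3 ≤ 2 * a 2)
    (hlow : ∀ n, 4 ≤ n → a (n - 1) + a (n - 3) ≤ a n)
    (hup : ∀ n, 4 ≤ n → a n ≤ 2 * a (n - 1)) :
    ∀ n, 4 ≤ n → 5 / 4 ≤ a n / a (n - 1) ∧ a n / a (n - 1) ≤ 2 := by
  have hub : ∀ m, 2 ≤ m → a m ≤ 2 * a (m - 1) := by
    intro m hm
    match m, hm with
    | 2, _ => simpa using h2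
    | 3, _ => simpa using h3
    | (k+4), _ => exact hup _ (by omega)
  intro n hn
  have hp1 : 0 < a (n - 1) := hpos _ (by omega)
  have hp3 : 0 < a (n - 3) := hpos _ (by omega)
  have e1 : n - 1 - 1 = n - 2 := by omega
  have e2 : n - 2 - 1 = n - 3 := by omega
  have u1 : a (n - 1) ≤ 2 * a (n - 2) := by
    have := hub (n - 1) (by omega); rwa [e1] at this
  have u2 : a (n - 2) ≤ 2 * a (n - 3) := by
    have := hub (n - 2) (by omega); rwa [e2] at this
  have hl := hlow n hn
  have hu := hup n hn
  constructor
  · rw [le_div_iff₀ hp1]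
    nlinarith
  · rw [div_le_iff₀ hp1]
    linarith
end

section
/- Let a : ℕ → ℝ be a sequence with a(n) > 0 for all n ≥ 1, a(1) = a(2) = a(3) = 1, a(5) ≥ 3, and such that for every integer n ≥ 4 both a(n−1) + a(n−3) ≤ a(n) ≤ 2·a(n−1) and 2·a(n−1) − Σ_{j=2}^{n+1−⌈√(n−1)⌉} a(j) ≤ a(n). Then for every integer n ≥ 5 one has max(5/8, 1 − 3·(4/5)^(⌈√(n−1)⌉ − 2)) ≤ a(n)/(2·a(n−1)) ≤ 1. -/
theorem stmt_4 (a : ℕ → ℝ)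
    (hpos : ∀ n, 1 ≤ n → 0 < a n)
    (h1 : a 1 = 1) (h2 : a 2 = 1) (h3 : a 3 = 1) (h5 : 3 ≤ a 5)
    (hlow : ∀ n, 4 ≤ n → a (n - 1) + a (n - 3) ≤ a n)
    (hup : ∀ n, 4 ≤ n → a n ≤ 2 * a (n - 1))
    (hlow2 : ∀ n, 4 ≤ n →
      2 * a (n - 1) - ∑ j ∈ Finset.Icc 2 (n + 1 - ⌈Real.sqrt ((n : ℝ) - 1)⌉₊), a j ≤ a n) :
    ∀ n : ℕ, 5 ≤ n →
      max (5 / 8) (1 - 3 * (4 / 5) ^ (⌈Real.sqrt ((n : ℝ) - 1)⌉₊ - 2)) ≤ a n / (2 * a (n - 1))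
      ∧ a n / (2 * a (n - 1)) ≤ 1 := by
  have ha4 : a 4 ≤ 2 := by
    have := hup 4 (by norm_num)
    norm_num [h3] at this
    linarith
  -- step ratio: a n ≥ (5/4) a (n-1) for n ≥ 6
  have hstep : ∀ n, 6 ≤ n → 5 / 4 * a (n - 1) ≤ a n := by
    intro n hn
    have hl := hlow n (by omega)
    have h2' := hup (n - 1) (by omega)
    have h3' := hup (n - 2) (by omega)
    have e1 : n - 1 - 1 = n - 2 := by omega
    have e2 : n - 2 - 1 = n - 3 := by omega
    rw [e1] at h2'
    rw [e2] at h3'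
    linarith
  have hmono : ∀ m, 5 ≤ m → a m ≤ 4 / 5 * a (m + 1) := by
    intro m hm
    have := hstep (m + 1) (by omega)
    simp only [Nat.add_sub_cancel] at this
    linarith
  -- geometric growth
  have hgeom : ∀ i m, 5 ≤ m → a m ≤ (4 / 5 : ℝ) ^ i * a (m + i) := by
    intro i
    induction i with
    | zero => intro m hm; simp
    | succ i ih =>
      intro m hm
      have h1' := ih m hm
      have h2' := hmono (m + i) (by omega)
      have hp : (0 : ℝ) < (4 / 5 : ℝ) ^ i := by positivity
      calc a m ≤ (4 / 5 : ℝ) ^ i * a (m + i) := h1'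
        _ ≤ (4 / 5 : ℝ) ^ i * (4 / 5 * a (m + i + 1)) := by
            apply mul_le_mul_of_nonneg_left h2' (le_of_lt hp)
        _ = (4 / 5 : ℝ) ^ (i + 1) * a (m + (i + 1)) := by ring_nf
  -- sum bound
  have hsum : ∀ m, 5 ≤ m → ∑ j ∈ Finset.Icc 2 m, a j ≤ 5 * a m := by
    intro m hm
    induction m, hm using Nat.le_induction with
    | base =>
      have : Finset.Icc 2 5 = {2, 3, 4, 5} := by decide
      rw [this]
      norm_num [h2, h3]
      linarith
    | succ m hm ih =>
      rw [Finset.sum_Icc_succ_top (by omega : 2 ≤ m + 1)]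
      have := hmono m hm
      linarith
  intro n hn
  have hpos1 : 0 < a (n - 1) := hpos (n - 1) (by omega)
  have hposn : 0 < a n := hpos n (by omega)
  have hden : (0 : ℝ) < 2 * a (n - 1) := by linarith
  constructor
  · -- lower bound
    rw [max_le_iff, le_div_iff₀ hden, le_div_iff₀ hden]
    constructor
    · -- 5/8 prong
      rcases eq_or_lt_of_le hn with h | h
      · -- n = 5
        have hn5 : n = 5 := h.symm
        subst hn5
        norm_num
        nlinarith
      · have := hstep n (by omega)
        linarith
    · -- second prong
      set k := ⌈Real.sqrt ((n : ℝ) - 1)⌉₊ with hk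
      have hcpos : (0 : ℝ) < (4 / 5 : ℝ) ^ (k - 2) := by positivity
      by_cases hk4 : 4 ≤ k
      · -- main case
        have hsq : ((k - 1 : ℕ) : ℝ) < Real.sqrt ((n : ℝ) - 1) := by
          rw [← Nat.lt_ceil]; omega
        have hnn : (0 : ℝ) ≤ (n : ℝ) - 1 := by
          have : (5 : ℝ) ≤ (n : ℝ) := by exact_mod_cast hn
          linarith
        have hsq2 : (((k - 1 : ℕ) : ℝ)) ^ 2 < (n : ℝ) - 1 := by
          have := Real.sq_sqrt hnn
          nlinarith [Real.sqrt_nonneg ((n : ℝ) - 1), hsq]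
        have hnat : (k - 1) ^ 2 + 1 ≤ n - 1 := by
          have : (((k - 1) ^ 2 : ℕ) : ℝ) < ((n - 1 : ℕ) : ℝ) := by
            push_cast [Nat.cast_sub (by omega : 1 ≤ n)]
            push_cast at hsq2 ⊢
            linarith
          exact_mod_cast this
        have hkm : (k - 1) * (k - 1) + 1 ≤ n - 1 := by
          have : (k - 1) ^ 2 = (k - 1) * (k - 1) := sq (k - 1) ▸ by ring
          omega
        have hmul : 3 * (k - 1) ≤ (k - 1) * (k - 1) :=
          Nat.mul_le_mul_right _ (by omega)
        have hm5 : 5 ≤ n + 1 - k := by omega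
        set m := n + 1 - k with hmdef
        have hS := hsum m hm5
        have hg := hgeom (k - 2) m hm5
        have hmi : m + (k - 2) = n - 1 := by omega
        rw [hmi] at hg
        have hlow2' := hlow2 n (by omega)
        rw [← hk, ← hmdef] at hlow2'
        -- a n ≥ 2 a(n-1) - 5 * (4/5)^(k-2) * a(n-1)
        have hSb : ∑ j ∈ Finset.Icc 2 m, a j ≤ 5 * ((4 / 5 : ℝ) ^ (k - 2) * a (n - 1)) := by
          calc ∑ j ∈ Finset.Icc 2 m, a j ≤ 5 * a m := hS
            _ ≤ 5 * ((4 / 5 : ℝ) ^ (k - 2) * a (n - 1)) := by linarith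
        nlinarith [mul_pos hcpos hpos1]
      · -- k ≤ 3 : bound is negative
        have hk2 : 2 ≤ k := by
          have h5' : (5 : ℝ) ≤ (n : ℝ) := by exact_mod_cast hn
          have h4 : (4 : ℝ) ≤ (n : ℝ) - 1 := by linarith
          have hs : (1 : ℝ) < Real.sqrt ((n : ℝ) - 1) := by
            have : (2 : ℝ) = Real.sqrt 4 := by
              rw [show (4 : ℝ) = 2 ^ 2 by norm_num, Real.sqrt_sq (by norm_num)]
            nlinarith [Real.sqrt_le_sqrt h4, this]
          have := Nat.lt_ceil.mpr (by exact_mod_cast hs : ((1 : ℕ) : ℝ) < Real.sqrt ((n : ℝ) - 1))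
          omega
        have hle : (4 / 5 : ℝ) ≤ (4 / 5 : ℝ) ^ (k - 2) := by
          interval_cases k <;> norm_num
        nlinarith
  · rw [div_le_one hden]
    exact hup n (by omega)
end

section
/- Let α be a real number with 0 < α < 1 and set δ = −ln α. Then the series Σ_{k=1}^{∞} α^(√k) converges, and for every integer m ≥ 2 one has Σ_{k=m}^{∞} α^(√k) ≤ (2/δ²)·(1 + δ·√(m−1))·α^(√(m−1)). -/
/-!
With `δ = -log α` the terms are `f k = exp (-δ √k)`, and `f` is decreasing on `[0, ∞)` with the
primitive `F x = -(2/δ²) (1 + δ √x) exp (-δ √x) ≤ 0`. By the mean value theorem,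
`f (a + 1) ≤ F (a + 1) - F a`, so the partial sums of the tail from `a + 1` telescope to at most
`F (a + N) - F a ≤ -F a`. Taking `a = m - 1` gives the bound, and `a = 0` gives summability.
-/

open Real Finset

noncomputable def expNegSqrtPrimitive (δ x : ℝ) : ℝ :=
  -(2 / δ ^ 2) * ((1 + δ * √x) * exp (-(δ * √x)))

namespace expNegSqrtPrimitive

variable {δ : ℝ}

theorem hasDerivAt (hδ : δ ≠ 0) {x : ℝ} (hx : 0 < x) :
    HasDerivAt (expNegSqrtPrimitive δ) (exp (-(δ * √x))) x := by
  have hsqrt : HasDerivAt (fun y => δ * √y) (δ * (1 / (2 * √x))) x :=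
    (hasDerivAt_sqrt hx.ne').const_mul δ
  have hx' : √x ≠ 0 := by positivity
  refine HasDerivAt.congr_deriv (f := expNegSqrtPrimitive δ)
    (((hsqrt.const_add 1).mul hsqrt.neg.exp).const_mul (-(2 / δ ^ 2))) ?_
  simp only [Pi.neg_apply]
  field_simp
  ring

theorem continuous (δ : ℝ) : Continuous (expNegSqrtPrimitive δ) := by
  unfold expNegSqrtPrimitive
  fun_prop

theorem nonpos (hδ : 0 ≤ δ) (x : ℝ) : expNegSqrtPrimitive δ x ≤ 0 := by
  unfold expNegSqrtPrimitive
  have : 0 ≤ 2 / δ ^ 2 * ((1 + δ * √x) * exp (-(δ * √x))) := by positivity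
  linarith

theorem exp_neg_mul_sqrt_succ_le_sub (hδ : 0 < δ) {a : ℝ} (ha : 0 ≤ a) :
    exp (-(δ * √(a + 1))) ≤ expNegSqrtPrimitive δ (a + 1) - expNegSqrtPrimitive δ a := by
  obtain ⟨c, ⟨-, hca⟩, hslope⟩ :=
    exists_hasDerivAt_eq_slope (expNegSqrtPrimitive δ) (fun x => exp (-(δ * √x)))
      (lt_add_one a) (continuous δ).continuousOn
      fun x hx => hasDerivAt hδ.ne' (ha.trans_lt hx.1)
  rw [add_sub_cancel_left, div_one] at hslope
  rw [← hslope, exp_le_exp, neg_le_neg_iff]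
  gcongr

theorem sum_range_exp_neg_mul_sqrt_le (hδ : 0 < δ) {a : ℝ} (ha : 0 ≤ a) (N : ℕ) :
    ∑ k ∈ range N, exp (-(δ * √(a + k + 1))) ≤ -expNegSqrtPrimitive δ a := by
  calc ∑ k ∈ range N, exp (-(δ * √(a + k + 1)))
      ≤ ∑ k ∈ range N, (expNegSqrtPrimitive δ (a + (k + 1 : ℕ)) -
          expNegSqrtPrimitive δ (a + k)) := by
        gcongr with k
        push_cast
        rw [← add_assoc]
        exact exp_neg_mul_sqrt_succ_le_sub hδ (by positivity)
    _ = expNegSqrtPrimitive δ (a + N) - expNegSqrtPrimitive δ a := by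
        simpa using sum_range_sub (fun k : ℕ => expNegSqrtPrimitive δ (a + k)) N
    _ ≤ -expNegSqrtPrimitive δ a := by linarith [nonpos hδ.le (a + N)]

end expNegSqrtPrimitive

open expNegSqrtPrimitive in
theorem stmt_9 (α : ℝ) (hα0 : 0 < α) (hα1 : α < 1) :
    Summable (fun k : ℕ => α ^ Real.sqrt k) ∧
    ∀ m : ℕ, 2 ≤ m →
      ∑' k : ℕ, α ^ Real.sqrt (m + k : ℕ) ≤
        (2 / (-Real.log α) ^ 2) * (1 + (-Real.log α) * Real.sqrt ((m : ℝ) - 1)) *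
          α ^ Real.sqrt ((m : ℝ) - 1) := by
  set δ := -log α
  have hδ : 0 < δ := neg_pos.mpr (log_neg hα0 hα1)
  have hpow (t : ℝ) : α ^ t = exp (-(δ * t)) := by rw [rpow_def_of_pos hα0, neg_mul, neg_neg]
  refine ⟨?_, fun m hm => ?_⟩
  · refine (summable_nat_add_iff 1).mp (summable_of_sum_range_le (c := -expNegSqrtPrimitive δ 0)
      (fun _ => by positivity) fun N => ?_)
    simpa [hpow] using sum_range_exp_neg_mul_sqrt_le hδ le_rfl N
  · have ha : (0 : ℝ) ≤ m - 1 := by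
      rw [sub_nonneg]; exact_mod_cast one_le_two.trans hm
    calc ∑' k : ℕ, α ^ √(m + k : ℕ)
        ≤ -expNegSqrtPrimitive δ (m - 1) := by
          refine Real.tsum_le_of_sum_range_le (fun _ => by positivity) fun N => ?_
          convert sum_range_exp_neg_mul_sqrt_le hδ ha N using 4 with k
          rw [hpow]; push_cast; ring_nf
      _ = _ := by rw [hpow]; unfold expNegSqrtPrimitive; ring
end

section
/- Let a : ℕ → ℝ be a sequence with a(n) > 0 for all n ≥ 1, a(1) = a(2) = a(3) = 1, a(5) ≥ 3, and such that for every integer n ≥ 4 both a(n−1) + a(n−3) ≤ a(n) ≤ 2·a(n−1) and 2·a(n−1) − Σ_{j=2}^{n+1−⌈√(n−1)⌉} a(j) ≤ a(n). Let C = lim_{n→∞} a(n)/2^n (which exists and is positive). Then for every integer m ≥ 5, with z₀ = min(3/8, 3·(4/5)^(⌈√(m−1)⌉ − 2)), ν = (75/16)/(1 − z₀), δ = ln(5/4), and F(x) = −(2/δ²)·(1 + δ·√x)·(4/5)^(√x), one has exp(ν·F(m−1)) · a(m)/2^m ≤ C ≤ a(m)/2^m. -/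
/-!
Write `b n = a n / 2 ^ n`. Since `a (n + 1) ≤ 2 a n`, `b` is nonincreasing, whence `C ≤ b m`.

For the lower bound, `a` grows at least by the factor `5 / 4` from `n = 3` on, so the sum in the
last hypothesis at `n + 1` is at most `5 (4/5)^(⌈√n⌉ - 2) a n`. Together with the growth factor this
gives `b (n + 1) ≥ (1 - z n) b n` with `z n = min (3/8) (3 (4/5)^(⌈√n⌉ - 2)) ≤ (75/16) (4/5)^√n`,
and `(4/5)^√n` is at most the integral of `(4/5)^√x` over `[n - 1, n]`, i.e. `F n - F (n - 1)`.
As `1 - z ≥ exp (-z / (1 - z₀))` for `0 ≤ z ≤ z₀ < 1`, the products of the factors `1 - z n`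
over `m ≤ n < N` are at least `exp (ν (F (m - 1) - F (N - 1))) ≥ exp (ν F (m - 1))`, since `F ≤ 0`.
-/

open Real Filter

noncomputable def primitiveExpNegSqrt (δ x : ℝ) : ℝ :=
  -(2 / δ ^ 2) * (1 + δ * √x) * exp (-δ * √x)

lemma hasDerivAt_primitiveExpNegSqrt {δ x : ℝ} (hδ : δ ≠ 0) (hx : 0 < x) :
    HasDerivAt (primitiveExpNegSqrt δ) (exp (-δ * √x)) x := by
  have hsqrt := hasDerivAt_sqrt hx.ne'
  refine ((((hsqrt.const_mul δ).const_add 1).const_mul (-(2 / δ ^ 2))).mul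
    (hsqrt.const_mul (-δ)).exp).congr_deriv ?_
  have : √x ≠ 0 := (sqrt_pos.2 hx).ne'
  field_simp
  ring

lemma primitiveExpNegSqrt_nonpos {δ : ℝ} (hδ : 0 ≤ δ) (x : ℝ) : primitiveExpNegSqrt δ x ≤ 0 :=
  mul_nonpos_of_nonpos_of_nonneg
    (mul_nonpos_of_nonpos_of_nonneg (neg_nonpos.2 (by positivity)) (by positivity)) (by positivity)

lemma mul_exp_neg_mul_sqrt_le_sub {δ x y : ℝ} (hδ : 0 < δ) (hx : 0 < x) (hxy : x ≤ y) :
    (y - x) * exp (-δ * √y) ≤ primitiveExpNegSqrt δ y - primitiveExpNegSqrt δ x := by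
  rw [mul_comm]
  have hderiv : ∀ t ∈ Set.Icc x y, HasDerivAt (primitiveExpNegSqrt δ) (exp (-δ * √t)) t :=
    fun t ht => hasDerivAt_primitiveExpNegSqrt hδ.ne' (hx.trans_le ht.1)
  refine (convex_Icc x y).mul_sub_le_image_sub_of_le_deriv
    (fun t ht => (hderiv t ht).continuousAt.continuousWithinAt)
    (fun t ht => (hderiv t (interior_subset ht)).differentiableAt.differentiableWithinAt)
    (fun t ht => ?_) x (Set.left_mem_Icc.2 hxy) y (Set.right_mem_Icc.2 hxy) hxy
  rw [interior_Icc] at ht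
  rw [(hderiv t (Set.Ioo_subset_Icc_self ht)).deriv]
  have := sqrt_le_sqrt ht.2.le
  exact exp_le_exp.2 (by nlinarith)

lemma exp_neg_div_one_sub_le_one_sub {z w : ℝ} (hz : 0 ≤ z) (hzw : z ≤ w) (hw : w < 1) :
    exp (-(z / (1 - w))) ≤ 1 - z := by
  have hz1 : 0 < 1 - z := by linarith
  -- `log x ≤ x - 1` at `x = 1 / (1 - z)`
  have hlog : -log (1 - z) ≤ z / (1 - z) := by
    have := log_le_sub_one_of_pos (one_div_pos.2 hz1)
    rw [one_div, log_inv] at this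
    convert this using 1
    field_simp
    ring
  have : z / (1 - z) ≤ z / (1 - w) := by gcongr
  calc exp (-(z / (1 - w))) ≤ exp (log (1 - z)) := by gcongr; linarith
    _ = 1 - z := exp_log hz1

lemma rpow_four_fifths (y : ℝ) : (4 / 5 : ℝ) ^ y = exp (-log (5 / 4) * y) := by
  rw [rpow_def_of_pos (by norm_num), show (4 / 5 : ℝ) = (5 / 4)⁻¹ by norm_num, log_inv]

noncomputable def stepDefect (x : ℝ) : ℝ :=
  min (3 / 8) (3 * (4 / 5) ^ (⌈√x⌉₊ - 2))

lemma stepDefect_nonneg (x : ℝ) : 0 ≤ stepDefect x :=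
  le_min (by norm_num) (by positivity)

lemma stepDefect_le (x : ℝ) : stepDefect x ≤ 3 / 8 :=
  min_le_left _ _

lemma stepDefect_antitone : Antitone stepDefect := fun _ _ hxy =>
  min_le_min le_rfl <| mul_le_mul_of_nonneg_left
    (pow_le_pow_of_le_one (by norm_num) (by norm_num)
      (Nat.sub_le_sub_right (Nat.ceil_mono (sqrt_le_sqrt hxy)) 2)) (by norm_num)

lemma stepDefect_le_exp (x : ℝ) : stepDefect x ≤ 75 / 16 * exp (-log (5 / 4) * √x) := by
  have hexp : √x - 2 ≤ ((⌈√x⌉₊ - 2 : ℕ) : ℝ) := by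
    rcases le_total 2 ⌈√x⌉₊ with hk | hk
    · rw [Nat.cast_sub hk]
      have := Nat.le_ceil √x
      push_cast
      linarith
    · rw [Nat.sub_eq_zero_of_le hk, Nat.cast_zero, sub_nonpos]
      exact (Nat.le_ceil √x).trans (by exact_mod_cast hk)
  calc stepDefect x ≤ 3 * (4 / 5) ^ (⌈√x⌉₊ - 2) := min_le_right _ _
    _ ≤ 3 * (4 / 5 : ℝ) ^ (√x - 2) := by
      rw [← rpow_natCast]
      exact mul_le_mul_of_nonneg_left
        (rpow_le_rpow_of_exponent_ge (by norm_num) (by norm_num) hexp) (by norm_num)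
    _ = 75 / 16 * exp (-log (5 / 4) * √x) := by
      rw [rpow_sub (by norm_num), rpow_four_fifths, rpow_two]
      ring

lemma exp_neg_le_one_sub_stepDefect {x w : ℝ} (hx : 1 < x) (hxw : stepDefect x ≤ w) (hw : w < 1) :
    exp (-(75 / 16 / (1 - w) * (primitiveExpNegSqrt (log (5 / 4)) x -
      primitiveExpNegSqrt (log (5 / 4)) (x - 1)))) ≤ 1 - stepDefect x := by
  have hincr := mul_exp_neg_mul_sqrt_le_sub (log_pos (by norm_num : (1 : ℝ) < 5 / 4))
    (sub_pos.2 hx) (sub_le_self x zero_le_one)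
  rw [sub_sub_cancel, one_mul] at hincr
  refine le_trans (exp_le_exp.2 ?_) (exp_neg_div_one_sub_le_one_sub (stepDefect_nonneg x) hxw hw)
  rw [neg_le_neg_iff, div_mul_eq_mul_div₀]
  gcongr
  exact (stepDefect_le_exp x).trans (by gcongr)

lemma mul_exp_le_of_one_sub_stepDefect_mul_le {b : ℕ → ℝ} {m : ℕ} (hm : 2 ≤ m)
    (hb : ∀ n, m ≤ n → 0 ≤ b n) (hstep : ∀ n, m ≤ n → (1 - stepDefect n) * b n ≤ b (n + 1))
    {N : ℕ} (hN : m ≤ N) :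
    exp (75 / 16 / (1 - stepDefect ((m : ℝ) - 1)) *
      primitiveExpNegSqrt (log (5 / 4)) ((m : ℝ) - 1)) * b m ≤ b N := by
  set ν := 75 / 16 / (1 - stepDefect ((m : ℝ) - 1))
  set P := primitiveExpNegSqrt (log (5 / 4))
  have hw : stepDefect ((m : ℝ) - 1) < 1 := by linarith [stepDefect_le ((m : ℝ) - 1)]
  have hν : 0 ≤ ν := div_nonneg (by norm_num) (sub_pos.2 hw).le
  -- `exp (ν * P (n - 1)) * b n` is nondecreasing from `m` on
  have hmono : ∀ n, m ≤ n → exp (ν * P ((n : ℝ) - 1)) * b n ≤ exp (ν * P n) * b (n + 1) := by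
    intro n hn
    have hmn : (m : ℝ) - 1 ≤ n := by linarith [(Nat.cast_le (α := ℝ)).2 hn]
    have hloss := exp_neg_le_one_sub_stepDefect (x := n) (by exact_mod_cast hm.trans hn)
      (stepDefect_antitone hmn) hw
    calc exp (ν * P ((n : ℝ) - 1)) * b n
        = exp (ν * P n) * (exp (-(ν * (P n - P ((n : ℝ) - 1)))) * b n) := by
          rw [← mul_assoc, ← exp_add]
          ring_nf
      _ ≤ exp (ν * P n) * ((1 - stepDefect n) * b n) := by
          gcongr
          exact hb n hn
      _ ≤ exp (ν * P n) * b (n + 1) := by gcongr; exact hstep n hn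
  have hP := primitiveExpNegSqrt_nonpos (log_nonneg (by norm_num : (1 : ℝ) ≤ 5 / 4)) ((N : ℝ) - 1)
  calc exp (ν * P ((m : ℝ) - 1)) * b m ≤ exp (ν * P ((N : ℝ) - 1)) * b N :=
        monotoneOn_nat_Ici_of_le_succ (f := fun n : ℕ => exp (ν * P ((n : ℝ) - 1)) * b n)
          (fun n hn => by simpa using hmono n hn) (le_refl m) hN hN
    _ ≤ b N :=
      mul_le_of_le_one_left (hb N hN) (exp_le_one_iff.2 (mul_nonpos_of_nonneg_of_nonpos hν hP))

section

variable {a : ℕ → ℝ}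

lemma le_pow_mul_of_le_mul_succ {q : ℝ} {l : ℕ} (hq : 0 ≤ q)
    (h : ∀ j, l ≤ j → a j ≤ q * a (j + 1)) {i n : ℕ} (hli : l ≤ i) (hin : i ≤ n) :
    a i ≤ q ^ (n - i) * a n := by
  induction n, hin using Nat.le_induction with
  | base => simp
  | succ n hin ih =>
    calc a i ≤ q ^ (n - i) * a n := ih
      _ ≤ q ^ (n - i) * (q * a (n + 1)) :=
        mul_le_mul_of_nonneg_left (h n (hli.trans hin)) (pow_nonneg hq _)
      _ = q ^ (n + 1 - i) * a (n + 1) := by rw [Nat.sub_add_comm hin, pow_succ]; ring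

lemma sum_Icc_le_div_one_sub {q : ℝ} {s l : ℕ} (hq : q < 1) (hsl : s ≤ l)
    (hbase : ∑ j ∈ Finset.Icc s l, a j ≤ a l / (1 - q))
    (h : ∀ j, l ≤ j → a j ≤ q * a (j + 1)) {K : ℕ} (hK : l ≤ K) :
    ∑ j ∈ Finset.Icc s K, a j ≤ a K / (1 - q) := by
  have h1q : 0 < 1 - q := sub_pos.2 hq
  induction K, hK using Nat.le_induction with
  | base => exact hbase
  | succ K hK ih =>
    rw [Finset.sum_Icc_succ_top (by omega)]
    calc ∑ j ∈ Finset.Icc s K, a j + a (K + 1) ≤ q * a (K + 1) / (1 - q) + a (K + 1) := by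
          have := div_le_div_of_nonneg_right (h K hK) h1q.le
          linarith
      _ = a (K + 1) / (1 - q) := by field_simp; ring

lemma five_fourths_mul_le_succ (h1 : a 1 = 1) (h3 : a 3 = 1) (h5 : 3 ≤ a 5)
    (hlow : ∀ n, 4 ≤ n → a (n - 1) + a (n - 3) ≤ a n)
    (hup : ∀ n, 4 ≤ n → a n ≤ 2 * a (n - 1)) {n : ℕ} (hn : 3 ≤ n) :
    5 / 4 * a n ≤ a (n + 1) := by
  have ha4 : a 4 = 2 := by
    have hl := hlow 4 le_rfl
    have hu := hup 4 le_rfl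
    norm_num [h1, h3] at hl hu
    linarith
  obtain rfl | rfl | hn : n = 3 ∨ n = 4 ∨ 5 ≤ n := by omega
  · norm_num [h3, ha4]
  · linarith
  -- `a n ≤ 4 a (n - 2)`, so the term `a (n - 2)` in the recursion adds at least `a n / 4`
  have hl := hlow (n + 1) (by omega)
  have hu := hup n (by omega)
  have hu' := hup (n - 1) (by omega)
  rw [Nat.add_sub_cancel, show n + 1 - 3 = n - 2 by omega] at hl
  rw [show n - 1 - 1 = n - 2 by omega] at hu'
  linarith

lemma sum_Icc_two_le (h2 : a 2 = 1) (h3 : a 3 = 1)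
    (hratio : ∀ n, 3 ≤ n → 5 / 4 * a n ≤ a (n + 1)) {K n : ℕ} (hK : 3 ≤ K) (hKn : K ≤ n) :
    ∑ j ∈ Finset.Icc 2 K, a j ≤ 5 * ((4 / 5) ^ (n - K) * a n) := by
  have hratio' : ∀ j, 3 ≤ j → a j ≤ 4 / 5 * a (j + 1) := fun j hj => by
    linarith [hratio j hj]
  have hbase : ∑ j ∈ Finset.Icc 2 3, a j ≤ a 3 / (1 - 4 / 5) := by
    rw [Finset.sum_Icc_succ_top (by norm_num), Finset.Icc_self, Finset.sum_singleton, h2, h3]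
    norm_num
  have hsum := sum_Icc_le_div_one_sub (by norm_num) (by norm_num) hbase hratio' hK
  have hlast := le_pow_mul_of_le_mul_succ (by norm_num) hratio' hK hKn
  norm_num at hsum
  linarith

lemma one_sub_stepDefect_mul_le (hpos : ∀ n, 1 ≤ n → 0 < a n) (h2 : a 2 = 1) (h3 : a 3 = 1)
    (hratio : ∀ n, 3 ≤ n → 5 / 4 * a n ≤ a (n + 1))
    (hlow2 : ∀ n, 4 ≤ n →
      2 * a (n - 1) - ∑ j ∈ Finset.Icc 2 (n + 1 - ⌈√((n : ℝ) - 1)⌉₊), a j ≤ a n)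
    {n : ℕ} (hn : 3 ≤ n) :
    (1 - stepDefect n) * (2 * a n) ≤ a (n + 1) := by
  have hn' : (3 : ℝ) ≤ n := by exact_mod_cast hn
  set k := ⌈√(n : ℝ)⌉₊ with hk
  have hk2 : 2 ≤ k := Nat.lt_ceil.2 <| lt_sqrt_of_sq_lt (by norm_num; linarith)
  have hkn : k ≤ n - 1 := Nat.ceil_le.2 <| by
    rw [Nat.cast_sub (by omega), Nat.cast_one]
    exact sqrt_le_iff.2 ⟨by linarith, by nlinarith⟩
  have hl := hlow2 (n + 1) (by omega)
  push_cast at hl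
  rw [add_sub_cancel_right, ← hk] at hl
  have hsum := sum_Icc_two_le h2 h3 hratio (K := n + 1 + 1 - k) (n := n) (by omega) (by omega)
  rw [show n - (n + 1 + 1 - k) = k - 2 by omega] at hsum
  have han := (hpos n (by omega)).le
  rcases le_total (3 / 8 : ℝ) (3 * (4 / 5) ^ (k - 2)) with hmin | hmin
  · rw [stepDefect, ← hk, min_eq_left hmin]
    linarith [hratio n hn]
  · rw [stepDefect, ← hk, min_eq_right hmin]
    nlinarith [mul_nonneg (pow_nonneg (by norm_num : (0 : ℝ) ≤ 4 / 5) (k - 2)) han]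

lemma div_two_pow_succ_le (hup : ∀ n, 4 ≤ n → a n ≤ 2 * a (n - 1)) {n : ℕ} (hn : 3 ≤ n) :
    a (n + 1) / 2 ^ (n + 1) ≤ a n / 2 ^ n := by
  have hu := hup (n + 1) (by omega)
  rw [Nat.add_sub_cancel] at hu
  rw [div_le_div_iff₀ (by positivity) (by positivity), pow_succ]
  nlinarith [pow_pos (two_pos : (0 : ℝ) < 2) n]

lemma one_sub_stepDefect_mul_div_le (hpos : ∀ n, 1 ≤ n → 0 < a n) (h2 : a 2 = 1) (h3 : a 3 = 1)
    (hratio : ∀ n, 3 ≤ n → 5 / 4 * a n ≤ a (n + 1))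
    (hlow2 : ∀ n, 4 ≤ n →
      2 * a (n - 1) - ∑ j ∈ Finset.Icc 2 (n + 1 - ⌈√((n : ℝ) - 1)⌉₊), a j ≤ a n)
    {n : ℕ} (hn : 3 ≤ n) :
    (1 - stepDefect n) * (a n / 2 ^ n) ≤ a (n + 1) / 2 ^ (n + 1) := by
  have h := one_sub_stepDefect_mul_le hpos h2 h3 hratio hlow2 hn
  rw [pow_succ, ← div_div, le_div_iff₀ two_pos]
  calc (1 - stepDefect n) * (a n / 2 ^ n) * 2 = (1 - stepDefect n) * (2 * a n) / 2 ^ n := by ring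
    _ ≤ a (n + 1) / 2 ^ n := by gcongr

end

theorem stmt_12 (a : ℕ → ℝ)
    (hpos : ∀ n, 1 ≤ n → 0 < a n)
    (h1 : a 1 = 1) (h2 : a 2 = 1) (h3 : a 3 = 1) (h5 : 3 ≤ a 5)
    (hlow : ∀ n, 4 ≤ n → a (n - 1) + a (n - 3) ≤ a n)
    (hup : ∀ n, 4 ≤ n → a n ≤ 2 * a (n - 1))
    (hlow2 : ∀ n, 4 ≤ n →
      2 * a (n - 1) - ∑ j ∈ Finset.Icc 2 (n + 1 - ⌈Real.sqrt ((n : ℝ) - 1)⌉₊), a j ≤ a n)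
    (C : ℝ) (hC : Tendsto (fun n => a n / 2 ^ n) atTop (nhds C)) :
    ∀ m : ℕ, 5 ≤ m →
      ∀ z₀ ν δ : ℝ, ∀ F : ℝ → ℝ,
        z₀ = min (3 / 8) (3 * (4 / 5) ^ (⌈Real.sqrt ((m : ℝ) - 1)⌉₊ - 2)) →
        ν = (75 / 16) / (1 - z₀) →
        δ = Real.log (5 / 4) →
        (∀ x : ℝ, F x = -(2 / δ ^ 2) * (1 + δ * Real.sqrt x) * (4 / 5 : ℝ) ^ Real.sqrt x) →
        Real.exp (ν * F ((m : ℝ) - 1)) * a m / 2 ^ m ≤ C ∧ C ≤ a m / 2 ^ m := by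
  intro m hm z₀ ν δ F hz₀ hν hδ hF
  have hF' : F = primitiveExpNegSqrt (log (5 / 4)) := by
    funext x
    rw [hF, hδ, rpow_four_fifths, primitiveExpNegSqrt]
  have hz₀' : z₀ = stepDefect ((m : ℝ) - 1) := hz₀
  subst hF' hz₀' hν
  have hratio := fun n => five_fourths_mul_le_succ h1 h3 h5 hlow hup (n := n)
  constructor
  · refine ge_of_tendsto hC (eventually_atTop.2 ⟨m, fun N hN => ?_⟩)
    rw [mul_div_assoc]
    exact mul_exp_le_of_one_sub_stepDefect_mul_le (by omega)
      (fun n hn => div_nonneg (hpos n (by omega)).le (by positivity))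
      (fun n hn => one_sub_stepDefect_mul_div_le hpos h2 h3 hratio hlow2 (by omega)) hN
  · have hdecr : ∀ n ≥ 3, a (n + 1) / 2 ^ (n + 1) ≤ a n / 2 ^ n :=
      fun n hn => div_two_pow_succ_le hup hn
    exact le_of_tendsto hC (eventually_atTop.2 ⟨m, fun N hN =>
      antitoneOn_nat_Ici_of_succ_le (f := fun n => a n / 2 ^ n) hdecr
        (show 3 ≤ m by omega) (show 3 ≤ N by omega) hN⟩)
end
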